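/- arXiv:2102.00936 — 2 statements merged into one kernel-verified Lean document; each statement's English description precedes it below -/
import Mathlib

section
/- (Passi–Joukhovitski) Let M be a commutative monoid with group completion i: M → M⁺, and let A be an abelian group. Then restriction along i gives a bijection between polynomial maps M⁺ → A of degree ≤ n and polynomial maps M → A of degree ≤ n. -/
/-!
Uniqueness: every element of `M⁺` is `i a - i b`, and the differences of a polynomial map along
`i b` have lower degree, so by induction on the degree two polynomial maps that agree on the
image of `i` agree.

Existence: let `I` be the augmentation ideal of `ℤ[M]`. A map `f` of degree `< n` kills `I ^ n`
(a product `p * ([y] - 1)` pairs with `f` as `p` pairs with `Δ_y f`), so it induces an additive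
map `F` on `R = ℤ[M] ⧸ I ^ n`. In `R` every `[m]` is `1 +` nilpotent, hence a unit, so `m ↦ [m]`
extends along `i` to a homomorphism `V : M⁺ → Rˣ` with values in `1 + I`. Then `F ∘ V` extends
`f`, and it has degree `< n` because each difference along `y` multiplies the argument of `F`
by `V y - 1 ∈ I`, and `I ^ n = 0` in `R`.
-/

/-- `PolyDeg n f` means that `f` is polynomial of degree `≤ n - 1`;
`PolyDeg 0 f` means `f` is identically zero (degree `≤ -1`),
and `PolyDeg (n+1) f` means `f` is polynomial of degree `≤ n`. -/
def PolyDeg {M A : Type*} [AddCommMonoid M] [AddCommGroup A] : ℕ → (M → A) → Prop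
  | 0, f => ∀ x, f x = 0
  | n + 1, f => ∀ y : M, PolyDeg n fun x => f (x + y) - f x

/-- `i : M →+ G` is a group completion of the commutative monoid `M` if every homomorphism
from `M` to an abelian group factors uniquely through `i`. -/
def IsGroupCompletion {M G : Type} [AddCommMonoid M] [AddCommGroup G] (i : M →+ G) : Prop :=
  ∀ (H : Type) [AddCommGroup H] (φ : M →+ H), ∃! ψ : G →+ H, ψ.comp i = φ

open AddMonoidAlgebra fwdDiff

section PolyDeg

variable {M A : Type*} [AddCommMonoid M] [AddCommGroup A]

theorem polyDeg_succ_iff {n : ℕ} {f : M → A} : PolyDeg (n + 1) f ↔ ∀ y, PolyDeg n (Δ_[y] f) :=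
  Iff.rfl

theorem PolyDeg.comp_addMonoidHom {N : Type*} [AddCommMonoid N] {n : ℕ} {f : M → A}
    (hf : PolyDeg n f) (j : N →+ M) : PolyDeg n (f ∘ j) := by
  induction n generalizing f with
  | zero => exact fun x => hf (j x)
  | succ n ih =>
    refine polyDeg_succ_iff.mpr fun y => ?_
    have hdiff : Δ_[y] (f ∘ j) = Δ_[j y] f ∘ j := funext fun x => by simp [fwdDiff]
    exact hdiff ▸ ih (hf (j y))

theorem PolyDeg.eq_of_comp_eq {G : Type*} [AddCommGroup G] {i : M →+ G}
    (hi : ∀ g, ∃ a b, i a - i b = g) {n : ℕ} {h h' : G → A} (hh : PolyDeg n h)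
    (hh' : PolyDeg n h') (heq : h ∘ i = h' ∘ i) : h = h' := by
  induction n generalizing h h' with
  | zero => exact funext fun g => (hh g).trans (hh' g).symm
  | succ n ih =>
    have heq' : ∀ m, h (i m) = h' (i m) := congrFun heq
    have hdiff : ∀ b, Δ_[i b] h = Δ_[i b] h' := fun b =>
      ih (hh (i b)) (hh' (i b)) (funext fun a => by simp [fwdDiff, ← map_add, heq'])
    funext g
    obtain ⟨a, b, rfl⟩ := hi g
    have hab := congrFun (hdiff b) (i a - i b)
    simp only [fwdDiff, sub_add_cancel, heq' a] at hab
    exact sub_right_inj.mp hab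

end PolyDeg

section GroupCompletion

variable {M G : Type} [AddCommMonoid M] [AddCommGroup G] {i : M →+ G}

theorem IsGroupCompletion.eq_top_of_forall_mem (hi : IsGroupCompletion i) {H : AddSubgroup G}
    (hH : ∀ m, i m ∈ H) : H = ⊤ := by
  obtain ⟨ψ, hψ, -⟩ := hi H (i.codRestrict H hH)
  obtain ⟨_, -, huniq⟩ := hi G i
  have hψ_id : H.subtype.comp ψ = AddMonoidHom.id G :=
    (huniq _ (by show (H.subtype.comp ψ).comp i = i; rw [AddMonoidHom.comp_assoc, hψ]; rfl)).trans
      (huniq _ (AddMonoidHom.id_comp i)).symm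
  refine (AddSubgroup.eq_top_iff' H).mpr fun g => ?_
  have hg : (ψ g : G) = g := DFunLike.congr_fun hψ_id g
  exact hg ▸ (ψ g).2

theorem IsGroupCompletion.exists_sub_eq (hi : IsGroupCompletion i) (g : G) :
    ∃ a b, i a - i b = g := by
  let H : AddSubgroup G :=
    { carrier := {g | ∃ a b, i a - i b = g}
      zero_mem' := ⟨0, 0, sub_self _⟩
      add_mem' := by
        rintro _ _ ⟨a, b, rfl⟩ ⟨c, d, rfl⟩
        exact ⟨a + c, b + d, by simp only [map_add]; abel⟩
      neg_mem' := by
        rintro _ ⟨a, b, rfl⟩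
        exact ⟨b, a, (neg_sub _ _).symm⟩ }
  exact (AddSubgroup.eq_top_iff' H).mp (hi.eq_top_of_forall_mem fun m => ⟨m, 0, by simp⟩) g

theorem IsGroupCompletion.exists_extension_of_isNilpotent (hi : IsGroupCompletion i)
    {R : Type} [CommRing R] {J : Ideal R} (hJ : IsNilpotent J) (v : Multiplicative M →* R)
    (hv : ∀ m, v (.ofAdd m) - 1 ∈ J) :
    ∃ V : G → R, (∀ x y, V (x + y) = V x * V y) ∧ (∀ g, V g - 1 ∈ J) ∧
      ∀ m, V (i m) = v (.ofAdd m) := by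
  obtain ⟨k, hk⟩ := hJ
  have hunit : ∀ m, IsUnit (v m) := fun m => by
    have hnil : IsNilpotent (v m - 1) := ⟨k, by
      have hmem := Ideal.pow_mem_pow (hv m.toAdd) k
      rwa [hk, Ideal.zero_eq_bot, Ideal.mem_bot] at hmem⟩
    simpa using hnil.isUnit_add_one
  obtain ⟨ψ, hψ, -⟩ :=
    hi (Additive Rˣ) (AddMonoidHom.toMultiplicativeLeft.symm (IsUnit.liftRight v hunit))
  let V : G → R := fun g => ((ψ g).toMul : R)
  have hV : ∀ x y, V (x + y) = V x * V y := fun x y => by simp [V]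
  have hVi : ∀ m, V (i m) = v (.ofAdd m) := fun m => by
    simp [V, ← AddMonoidHom.comp_apply, hψ, IsUnit.coe_liftRight]
  refine ⟨V, hV, fun g => ?_, hVi⟩
  obtain ⟨a, b, rfl⟩ := hi.exists_sub_eq g
  have hab : V (i a - i b) * V (i b) = V (i a) := by rw [← hV, sub_add_cancel]
  have hb : 1 - V (i b) ∈ J := by rw [← neg_sub, hVi]; exact J.neg_mem (hv b)
  rw [show V (i a - i b) - 1 = V (i a - i b) * (1 - V (i b)) + (V (i a) - 1) by
    rw [← hab]; ring]
  exact J.add_mem (J.mul_mem_left _ hb) (hVi a ▸ hv a)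

end GroupCompletion

section LinearExtension

variable {M A : Type*} [AddCommGroup A]

noncomputable def linearExtension (f : M → A) : ℤ[M] →+ A :=
  (Finsupp.linearCombination ℤ f).toAddMonoidHom.comp coeffAddEquiv.toAddMonoidHom

@[simp]
theorem linearExtension_single (f : M → A) (m : M) (c : ℤ) :
    linearExtension f (single m c) = c • f m := by
  simp [linearExtension, coeffAddEquiv]

variable [AddCommMonoid M]

variable (M) in
noncomputable def augmentationIdeal : Ideal ℤ[M] :=
  Ideal.span (Set.range fun y : M => single y 1 - 1)

theorem linearExtension_mul_single_sub_one (f : M → A) (p : ℤ[M]) (y : M) :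
    linearExtension f (p * (single y 1 - 1)) = linearExtension (Δ_[y] f) p := by
  induction p using AddMonoidAlgebra.induction_linear with
  | zero => simp
  | add p q hp hq => rw [add_mul, map_add, map_add, hp, hq]
  | single m c => simp [mul_sub, single_mul_single, one_def, fwdDiff, smul_sub]

theorem PolyDeg.linearExtension_eq_zero {n : ℕ} {f : M → A} (hf : PolyDeg n f) {p : ℤ[M]}
    (hp : p ∈ augmentationIdeal M ^ n) : linearExtension f p = 0 := by
  induction n generalizing f p with
  | zero =>
    obtain rfl : f = 0 := funext hf
    simp [linearExtension]
  | succ n ih =>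
    rw [pow_succ] at hp
    refine Submodule.mul_induction_on hp (fun a ha b hb => ?_)
      (fun _ _ hx hy => by rw [map_add, hx, hy, add_zero])
    induction hb using Submodule.span_induction generalizing a with
    | mem b hb =>
      obtain ⟨y, rfl⟩ := hb
      rw [linearExtension_mul_single_sub_one]
      exact ih (hf y) ha
    | zero => simp
    | add b c _ _ hb hc => rw [mul_add, map_add, hb a ha, hc a ha, add_zero]
    | smul c b _ hb => rw [smul_eq_mul, ← mul_assoc]; exact hb _ (Ideal.mul_mem_right c _ ha)

end LinearExtension

theorem polyDeg_comp_of_map_add_eq_mul {G R A : Type*} [AddCommMonoid G] [CommRing R]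
    [AddCommGroup A] {J : Ideal R} {V : G → R} (hV : ∀ x y, V (x + y) = V x * V y)
    (hVJ : ∀ y, V y - 1 ∈ J) {n : ℕ} {F : R →+ A} (hF : ∀ r ∈ J ^ n, F r = 0) :
    PolyDeg n (F ∘ V) := by
  induction n generalizing F with
  | zero => exact fun x => hF _ (by simp)
  | succ n ih =>
    refine polyDeg_succ_iff.mpr fun y => ?_
    have hdiff : Δ_[y] (F ∘ V) = F.comp (AddMonoidHom.mulRight (V y - 1)) ∘ V :=
      funext fun x => by simp [fwdDiff, hV, mul_sub]
    rw [hdiff]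
    exact ih fun r hr => hF _ (by rw [pow_succ]; exact Ideal.mul_mem_mul hr (hVJ y))

theorem IsGroupCompletion.exists_polyDeg_comp_eq {M G A : Type} [AddCommMonoid M]
    [AddCommGroup G] [AddCommGroup A] {i : M →+ G} (hi : IsGroupCompletion i) {n : ℕ}
    {f : M → A} (hf : PolyDeg n f) : ∃ h : G → A, PolyDeg n h ∧ h ∘ i = f := by
  let K := augmentationIdeal M ^ n
  let J := (augmentationIdeal M).map (Ideal.Quotient.mk K)
  have hJ : J ^ n = ⊥ := by rw [← Ideal.map_pow]; exact Ideal.map_quotient_self K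
  have hJ_nil : IsNilpotent J := ⟨n, hJ⟩
  obtain ⟨V, hV, hVJ, hVi⟩ := hi.exists_extension_of_isNilpotent hJ_nil
    ((Ideal.Quotient.mk K).toMonoidHom.comp (of ℤ M)) fun m => by
      have hm : single m 1 - 1 ∈ augmentationIdeal M := Ideal.subset_span (Set.mem_range_self m)
      simpa using Ideal.mem_map_of_mem (Ideal.Quotient.mk K) hm
  let F : ℤ[M] ⧸ K →+ A :=
    QuotientAddGroup.lift K.toAddSubgroup (linearExtension f) fun _ hp =>
      hf.linearExtension_eq_zero hp
  refine ⟨F ∘ V, polyDeg_comp_of_map_add_eq_mul hV hVJ fun r hr => ?_, funext fun m => ?_⟩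
  · rw [hJ, Ideal.mem_bot] at hr
    rw [hr, map_zero]
  · show F (V (i m)) = f m
    rw [hVi]
    exact (linearExtension_single f m 1).trans (one_smul ℤ (f m))

/-- (Passi–Joukhovitski) Restriction along the group completion `i : M → M⁺` gives a bijection
between polynomial maps `M⁺ → A` of degree `≤ n` and polynomial maps `M → A` of degree `≤ n`:
the restriction of a polynomial map is polynomial, and every polynomial map on `M` extends
uniquely to a polynomial map on `M⁺`. -/
theorem polyDeg_group_completion_bijection {M G A : Type} [AddCommMonoid M] [AddCommGroup G]
    [AddCommGroup A] (i : M →+ G) (hi : IsGroupCompletion i) (n : ℕ) :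
    (∀ h : G → A, PolyDeg (n + 1) h → PolyDeg (n + 1) (h ∘ i)) ∧
    (∀ f : M → A, PolyDeg (n + 1) f →
      ∃! h : G → A, PolyDeg (n + 1) h ∧ h ∘ i = f) := by
  refine ⟨fun h hh => hh.comp_addMonoidHom i, fun f hf => ?_⟩
  obtain ⟨h, hh, hhi⟩ := hi.exists_polyDeg_comp_eq hf
  exact ⟨h, ⟨hh, hhi⟩, fun h' ⟨hh', hh'i⟩ =>
    hh'.eq_of_comp_eq hi.exists_sub_eq hh (hh'i.trans hhi.symm)⟩
end

section
/- Let M be a commutative monoid, A an abelian group, and f: M → A a polynomial map. Let N ⊆ M × M be a submonoid containing the diagonal such that f(m₁) = f(m₂) for all (m₁, m₂) ∈ N. Then the unique polynomial extension f⁺: M⁺ → A to the group completion factors through the quotient of M⁺ by the subgroup generated by the elements m₁ - m₂ for (m₁, m₂) ∈ N. -/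
/-!
Translating `f⁺` by `i m₁ - i m₂` with `(m₁, m₂) ∈ N` does not change it: the difference
`x ↦ f⁺ (x + i m₁) - f⁺ (x + i m₂)` is again polynomial, and it vanishes on the image of `M`
because `(m + m₁, m + m₂) ∈ N`. A polynomial map on `M⁺` vanishing on the image of `M` vanishes
identically (by induction on the degree, its differences along `i m` vanish, so it is invariant
under the subgroup generated by the image, which is all of `M⁺`). Hence the whole subgroup
generated by the elements `i m₁ - i m₂` consists of periods of `f⁺`.
-/

namespace PolyDeg

variable {M A : Type*} [AddCommMonoid M] [AddCommGroup A]

theorem congr {n : ℕ} {f g : M → A} (hf : PolyDeg n f) (h : ∀ x, f x = g x) : PolyDeg n g := by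
  rwa [← funext h]

theorem sub {n : ℕ} {f g : M → A} (hf : PolyDeg n f) (hg : PolyDeg n g) :
    PolyDeg n fun x => f x - g x := by
  induction n generalizing f g with
  | zero => intro x; simp only [hf x, hg x, sub_zero]
  | succ n ih => exact fun y => (ih (hf y) (hg y)).congr fun x => by beta_reduce; abel

theorem comp_add_right {n : ℕ} {f : M → A} (hf : PolyDeg n f) (c : M) :
    PolyDeg n fun x => f (x + c) := by
  induction n generalizing f with
  | zero => exact fun x => hf _
  | succ n ih => exact fun y => (ih (hf y)).congr fun x => by rw [add_right_comm]

end PolyDeg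

def periodSubgroup {G A : Type*} [AddGroup G] (f : G → A) : AddSubgroup G where
  carrier := {c | Function.Periodic f c}
  zero_mem' := fun x => by rw [add_zero]
  add_mem' := fun ha hb => ha.add_period hb
  neg_mem' := fun ha => ha.neg

theorem exists_comp_mk_of_le_periodSubgroup {G A : Type*} [AddGroup G] {f : G → A}
    {K : AddSubgroup G} (hK : K ≤ periodSubgroup f) :
    ∃ g : G ⧸ K → A, f = g ∘ QuotientAddGroup.mk := by
  refine ⟨Quotient.lift f fun a b hab => ?_, rfl⟩
  have hba : -a + b ∈ K := QuotientAddGroup.leftRel_apply.mp hab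
  simpa using (hK hba a).symm

theorem IsGroupCompletion.closure_range_eq_top {M G : Type} [AddCommMonoid M] [AddCommGroup G]
    {i : M →+ G} (hi : IsGroupCompletion i) : AddSubgroup.closure (Set.range i) = ⊤ := by
  set K := AddSubgroup.closure (Set.range i)
  obtain ⟨ψ, -, huniq⟩ := hi (G ⧸ K) ((QuotientAddGroup.mk' K).comp i)
  -- `mk' K` and `0` both extend `mk' K ∘ i`, which vanishes.
  have hmk : QuotientAddGroup.mk' K = 0 := by
    refine (huniq _ rfl).trans (huniq 0 ?_).symm
    ext m
    exact ((QuotientAddGroup.eq_zero_iff _).mpr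
      (AddSubgroup.subset_closure (Set.mem_range_self m))).symm
  rw [← QuotientAddGroup.ker_mk' K, hmk, AddMonoidHom.ker_zero]

theorem PolyDeg.eq_zero_of_comp_eq_zero {M G A : Type*} [AddCommMonoid M] [AddCommGroup G]
    [AddCommGroup A] {i : M →+ G} (hgen : AddSubgroup.closure (Set.range i) = ⊤) {n : ℕ}
    {h : G → A} (hh : PolyDeg n h) (hz : ∀ m, h (i m) = 0) (x : G) : h x = 0 := by
  induction n generalizing h x with
  | zero => exact hh x
  | succ n ih =>
    have hperiod : AddSubgroup.closure (Set.range i) ≤ periodSubgroup h := by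
      rw [AddSubgroup.closure_le]
      rintro _ ⟨m, rfl⟩ y
      refine sub_eq_zero.mp (ih (hh (i m)) (fun m' => ?_) y)
      rw [← map_add, hz, hz, sub_zero]
    rw [hgen] at hperiod
    have hx : h (0 + x) = h 0 := hperiod (AddSubgroup.mem_top x) 0
    rwa [zero_add, ← i.map_zero, hz] at hx

theorem polyDeg_extension_factors_general {M G A : Type} [AddCommMonoid M] [AddCommGroup G]
    [AddCommGroup A] (i : M →+ G) (hi : IsGroupCompletion i) (n : ℕ)
    (f : M → A)
    (fplus : G → A) (hfplus : PolyDeg (n + 1) fplus) (hext : ∀ m : M, fplus (i m) = f m)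
    (N : AddSubmonoid (M × M)) (hdiag : ∀ m : M, (m, m) ∈ N)
    (hN : ∀ q ∈ N, f q.1 = f q.2) :
    ∃ g : G ⧸ AddSubgroup.closure {z : G | ∃ q ∈ N, z = i q.1 - i q.2} → A,
      fplus = g ∘ (QuotientAddGroup.mk :
        G → G ⧸ AddSubgroup.closure {z : G | ∃ q ∈ N, z = i q.1 - i q.2}) := by
  refine exists_comp_mk_of_le_periodSubgroup ((AddSubgroup.closure_le _).mpr ?_)
  rintro _ ⟨q, hq, rfl⟩ x
  have hdiff : ∀ y, fplus (y + i q.1) - fplus (y + i q.2) = 0 :=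
    ((hfplus.comp_add_right (i q.1)).sub (hfplus.comp_add_right (i q.2))).eq_zero_of_comp_eq_zero
      hi.closure_range_eq_top fun m => by
        rw [← map_add, ← map_add, hext, hext, sub_eq_zero]
        exact hN _ (N.add_mem (hdiag m) hq)
  simpa [sub_add_eq_add_sub, add_sub_assoc] using sub_eq_zero.mp (hdiff (x - i q.2))

/-- Let `f : M → A` be a polynomial map of degree `≤ n` and `N ⊆ M × M` a submonoid containing
the diagonal with `f m₁ = f m₂` for all `(m₁, m₂) ∈ N`. Then the (unique) polynomial extension
`f⁺ : M⁺ → A` to the group completion factors through the quotient of `M⁺` by the subgroup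
generated by the elements `m₁ - m₂` for `(m₁, m₂) ∈ N`. -/
theorem polyDeg_extension_factors {M G A : Type} [AddCommMonoid M] [AddCommGroup G]
    [AddCommGroup A] (i : M →+ G) (hi : IsGroupCompletion i) (n : ℕ)
    (f : M → A) (hf : PolyDeg (n + 1) f)
    (fplus : G → A) (hfplus : PolyDeg (n + 1) fplus) (hext : ∀ m : M, fplus (i m) = f m)
    (N : AddSubmonoid (M × M)) (hdiag : ∀ m : M, (m, m) ∈ N)
    (hN : ∀ q ∈ N, f q.1 = f q.2) :
    ∃ g : G ⧸ AddSubgroup.closure {z : G | ∃ q ∈ N, z = i q.1 - i q.2} → A,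
      fplus = g ∘ (QuotientAddGroup.mk :
        G → G ⧸ AddSubgroup.closure {z : G | ∃ q ∈ N, z = i q.1 - i q.2}) :=
  polyDeg_extension_factors_general i hi n f fplus hfplus hext N hdiag hN
end
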